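/- For all f < 0, (1 − 2f)^{1/2}(2f² − 5f + 2) > 2(1 − f) > 0; in particular the map f ↦ 2(1 − f)/((1 − 2f)^{1/2}(2f² − 5f + 2)) takes values in (0, 1) on (−∞, 0) and tends to 0 as f → −∞. -/

import Mathlib

/-!
For `f < 0` the square root is at least `1` and the quadratic `2f² - 5f + 2` exceeds `2(1 - f)`
by `f(2f - 3) > 0`, so the denominator beats the numerator. For the limit, the same bound
`√(1 - 2f) ≥ 1` squeezes the ratio between `0` and `1 / (-f)`.
-/

open Real Filter

noncomputable def chatteringRatio (f : ℝ) : ℝ :=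
  2 * (1 - f) / (√(1 - 2 * f) * (2 * f ^ 2 - 5 * f + 2))

section

variable {f : ℝ}

lemma one_le_sqrt_one_sub_two_mul (hf : f ≤ 0) : 1 ≤ √(1 - 2 * f) :=
  Real.one_le_sqrt.mpr (by linarith)

lemma two_mul_one_sub_lt_quadratic (hf : f < 0) : 2 * (1 - f) < 2 * f ^ 2 - 5 * f + 2 := by
  nlinarith

lemma two_mul_one_sub_lt_sqrt_mul_quadratic (hf : f < 0) :
    2 * (1 - f) < √(1 - 2 * f) * (2 * f ^ 2 - 5 * f + 2) := by
  have hs := one_le_sqrt_one_sub_two_mul hf.le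
  have hq := two_mul_one_sub_lt_quadratic hf
  calc 2 * (1 - f) < 1 * (2 * f ^ 2 - 5 * f + 2) := by linarith
    _ ≤ √(1 - 2 * f) * (2 * f ^ 2 - 5 * f + 2) := by gcongr; linarith

lemma chatteringRatio_mem_Ioo (hf : f < 0) : chatteringRatio f ∈ Set.Ioo 0 1 := by
  have hnum : 0 < 2 * (1 - f) := by linarith
  have hlt := two_mul_one_sub_lt_sqrt_mul_quadratic hf
  have hden := hnum.trans hlt
  exact ⟨div_pos hnum hden, (div_lt_one hden).mpr hlt⟩

lemma chatteringRatio_le_inv_neg (hf : f < 0) : chatteringRatio f ≤ (-f)⁻¹ := by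
  have hs := one_le_sqrt_one_sub_two_mul hf.le
  have hden := (by linarith : (0 : ℝ) < 2 * (1 - f)).trans (two_mul_one_sub_lt_sqrt_mul_quadratic hf)
  rw [chatteringRatio, inv_eq_one_div, div_le_div_iff₀ hden (neg_pos.mpr hf)]
  -- `2(1 - f)(-f) ≤ 2f² - 5f + 2` reduces to `3f ≤ 2`
  nlinarith [two_mul_one_sub_lt_quadratic hf]

end

lemma tendsto_chatteringRatio_atBot : Tendsto chatteringRatio atBot (nhds 0) := by
  have hneg : ∀ᶠ f : ℝ in atBot, f < 0 := eventually_lt_atBot 0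
  refine tendsto_of_tendsto_of_tendsto_of_le_of_le' tendsto_const_nhds
    (tendsto_inv_atTop_zero.comp tendsto_neg_atBot_atTop) ?_ ?_
  · filter_upwards [hneg] with f hf using (chatteringRatio_mem_Ioo hf).1.le
  · filter_upwards [hneg] with f hf using chatteringRatio_le_inv_neg hf

theorem stmt_19 :
    (∀ f : ℝ, f < 0 →
      Real.sqrt (1 - 2 * f) * (2 * f ^ 2 - 5 * f + 2) > 2 * (1 - f) ∧ 2 * (1 - f) > 0 ∧
      2 * (1 - f) / (Real.sqrt (1 - 2 * f) * (2 * f ^ 2 - 5 * f + 2)) ∈ Set.Ioo (0 : ℝ) 1) ∧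
    Tendsto (fun f : ℝ => 2 * (1 - f) / (Real.sqrt (1 - 2 * f) * (2 * f ^ 2 - 5 * f + 2)))
      atBot (nhds 0) :=
  ⟨fun _ hf => ⟨two_mul_one_sub_lt_sqrt_mul_quadratic hf, by linarith, chatteringRatio_mem_Ioo hf⟩,
    tendsto_chatteringRatio_atBot⟩
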